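/- Let T be a finite tree (a finite connected acyclic simple graph) with maximum degree Δ(T) ≥ 4. Then pn(E_c(T)) = ⌈Δ(T)/2⌉, where E_c denotes the complete expansion graph and pn denotes the pagenumber. -/

import Mathlib

open SimpleGraph

/-- The vertex type of the complete expansion graph of `G`: incidence pairs `(v, e)`
with `e` an edge of `G` and `v` an endpoint of `e`. -/
abbrev IncidencePair {V : Type*} (G : SimpleGraph V) : Type _ :=
  {p : V × Sym2 V // p.2 ∈ G.edgeSet ∧ p.1 ∈ p.2}

/-- The complete expansion graph `E_c(G)` of a simple graph `G`: vertices are the incidence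
pairs `(v, e)` of `G`, and two distinct pairs `(v, e)`, `(w, f)` are adjacent iff `v = w`
or `e = f`. -/
def completeExpansion {V : Type*} (G : SimpleGraph V) : SimpleGraph (IncidencePair G) :=
  SimpleGraph.fromRel (fun x y =>
    (x : V × Sym2 V).1 = (y : V × Sym2 V).1 ∨ (x : V × Sym2 V).2 = (y : V × Sym2 V).2)

/-- With vertices placed on the spine at positions `f`, the edges `e = {a,b}` and
`e' = {c,d}` cross iff (for suitable representations) `f a < f c < f b < f d`. -/
def edgesCross {V : Type*} (f : V → ℕ) (e e' : Sym2 V) : Prop :=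
  ∃ a b c d : V, e = s(a, b) ∧ e' = s(c, d) ∧ f a < f c ∧ f c < f b ∧ f b < f d

/-- `G` admits a `k`-page book embedding: the vertices are linearly ordered along the spine
(via an injection into `ℕ`), every edge is either drawn on the spine (`none`, which is only
possible for an edge joining two consecutive vertices of the spine) or assigned to one of
`k` pages, and two edges assigned to the same page never cross. -/
def HasBookEmbedding {V : Type*} (G : SimpleGraph V) (k : ℕ) : Prop :=
  ∃ (f : V → ℕ) (page : G.edgeSet → Option (Fin k)),
    Function.Injective f ∧
    (∀ e : G.edgeSet, page e = none →
      ∃ a b : V, (e : Sym2 V) = s(a, b) ∧ f a < f b ∧ ∀ c : V, ¬(f a < f c ∧ f c < f b)) ∧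
    (∀ e e' : G.edgeSet, (page e).isSome → page e = page e' →
      ¬ edgesCross f (e : Sym2 V) (e' : Sym2 V))

/-- The pagenumber of `G`: the least number of pages of a book embedding of `G`. -/
noncomputable def pageNumber {V : Type*} (G : SimpleGraph V) : ℕ :=
  sInf {k | HasBookEmbedding G k}

/-!
Lower bound: the `Δ` incidence pairs at a vertex of maximum degree form a clique of `E_c(T)`.
In a `k`-page book embedding of `K_n`, only the `n - 1` chords joining spine-consecutive clique
vertices can avoid the pages. The remaining chords on one page, apart from the outermost chord,
cut out a laminar family of sets of at least two clique positions among the first `n - 1`, so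
there are at most `n - 3` of them. Hence `n (n - 1) / 2 ≤ (n - 1) + 1 + k (n - 3)`, which forces
`k ≥ ⌈n / 2⌉` once `n ≥ 4`.

Upper bound: order the vertices of `T` in depth-first preorder (the lexicographic order of the
paths from a root) and put the two incidence pairs of each tree edge next to each other on the
spine. Cliques of distinct vertices then never interleave: the clique of a descendant lies in a
gap of the clique of its ancestor, and cliques in disjoint subtrees occupy disjoint intervals.
So every clique can use its own copy of the `⌈deg / 2⌉`-page embedding of a complete graph, while
the edges between cliques join spine neighbours and cross nothing.
-/

open Finset

theorem Finset.card_le_of_laminar {α : Type*} [DecidableEq α] {F : Finset (Finset α)}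
    {G : Finset α} (hsub : ∀ A ∈ F, A ⊆ G ∧ 2 ≤ #A)
    (hlam : ∀ A ∈ F, ∀ B ∈ F, A ⊆ B ∨ B ⊆ A ∨ Disjoint A B) :
    #F ≤ #G - 2 + if G ∈ F then 1 else 0 := by
  induction F using Finset.strongInduction generalizing G with
  | _ F ih =>
  have lam_of_subset : ∀ S ⊆ F, ∀ A ∈ S, ∀ B ∈ S, A ⊆ B ∨ B ⊆ A ∨ Disjoint A B :=
    fun S hS A hA B hB => hlam A (hS hA) B (hS hB)
  rcases F.eq_empty_or_nonempty with rfl | hne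
  · simp
  by_cases hGF : G ∈ F
  · have h := ih _ (erase_ssubset hGF) (fun A hA => hsub A (mem_of_mem_erase hA))
      (lam_of_subset _ (erase_subset _ _))
    rw [if_neg (notMem_erase _ _), card_erase_of_mem hGF] at h
    rw [if_pos hGF]
    omega
  -- Split off a largest member `M`: the others lie inside `M` or inside `G \ M`.
  obtain ⟨M, hM, hMmax⟩ := F.exists_max_image card hne
  obtain ⟨hMG, hM2⟩ := hsub M hM
  set inside := {A ∈ F.erase M | A ⊆ M}
  set outside := {A ∈ F.erase M | ¬A ⊆ M}
  have hcard : #F = 1 + #inside + #outside := by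
    rw [add_assoc, card_filter_add_card_filter_not, add_comm, card_erase_add_one hM]
  have houtside : ∀ A ∈ outside, A ⊆ G \ M ∧ 2 ≤ #A := by
    intro A hA
    obtain ⟨hA', hAM⟩ := mem_filter.mp hA
    have hAF := mem_of_mem_erase hA'
    have hdisj : Disjoint A M := by
      rcases hlam A hAF M hM with h | h | h
      · exact absurd h hAM
      · exact absurd (eq_of_subset_of_card_le h (hMmax A hAF)).symm (ne_of_mem_erase hA')
      · exact h
    exact ⟨subset_sdiff.mpr ⟨(hsub A hAF).1, hdisj⟩, (hsub A hAF).2⟩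
  have hinside : ∀ A ∈ inside, A ⊆ M ∧ 2 ≤ #A := fun A hA =>
    ⟨(mem_filter.mp hA).2, (hsub A (mem_of_mem_erase (mem_filter.mp hA).1)).2⟩
  have hinsideF : inside ⊂ F := (filter_subset _ _).trans_ssubset (erase_ssubset hM)
  have houtsideF : outside ⊂ F := (filter_subset _ _).trans_ssubset (erase_ssubset hM)
  have h1 := ih inside hinsideF hinside (lam_of_subset _ hinsideF.subset)
  have h2 := ih outside houtsideF houtside (lam_of_subset _ houtsideF.subset)
  rw [if_neg fun h => notMem_erase M F (mem_filter.mp h).1] at h1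
  have hMG' : #M < #G := card_lt_card (ssubset_of_subset_of_ne hMG (by rintro rfl; exact hGF hM))
  rw [card_sdiff_of_subset hMG] at h2
  rw [if_neg hGF]
  split_ifs at h2 with hGM
  · have := (houtside _ hGM).2
    rw [card_sdiff_of_subset hMG] at this
    omega
  · omega

section Chords

variable {P : Finset ℕ}

theorem inter_Ico_laminar {a b c d : ℕ} (h₁ : ¬(a < c ∧ c < b ∧ b < d))
    (h₂ : ¬(c < a ∧ a < d ∧ d < b)) :
    P ∩ Ico a b ⊆ P ∩ Ico c d ∨ P ∩ Ico c d ⊆ P ∩ Ico a b ∨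
      Disjoint (P ∩ Ico a b) (P ∩ Ico c d) := by
  simp only [subset_iff, Finset.disjoint_left, mem_inter, mem_Ico]
  by_cases g₁ : c ≤ a ∧ b ≤ d
  · exact Or.inl fun t ht => ⟨ht.1, by omega⟩
  by_cases g₂ : a ≤ c ∧ d ≤ b
  · exact Or.inr <| Or.inl fun t ht => ⟨ht.1, by omega⟩
  exact Or.inr <| Or.inr fun t ht ht' => by omega

theorem eq_of_inter_Ico_eq {a b c d : ℕ} (ha : a ∈ P) (hb : b ∈ P) (hc : c ∈ P) (hd : d ∈ P)
    (hab : a < b) (hcd : c < d) (h : P ∩ Ico a b = P ∩ Ico c d) : a = c ∧ b = d := by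
  have mem : ∀ {t}, t ∈ P → ∀ {x y}, x ≤ t → t < y → t ∈ P ∩ Ico x y := fun ht _ _ h₁ h₂ =>
    mem_inter.mpr ⟨ht, mem_Ico.mpr ⟨h₁, h₂⟩⟩
  have hac : a = c := by
    have h₁ := mem_Ico.mp (mem_inter.mp (h ▸ mem ha le_rfl hab)).2
    have h₂ := mem_Ico.mp (mem_inter.mp (h ▸ mem hc le_rfl hcd)).2
    omega
  subst hac
  refine ⟨rfl, le_antisymm ?_ ?_⟩ <;> by_contra! hlt
  · have := mem_Ico.mp (mem_inter.mp (h ▸ mem hd hcd.le hlt)).2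
    omega
  · have := mem_Ico.mp (mem_inter.mp (h.symm ▸ mem hb hab.le hlt)).2
    omega

theorem two_le_card_inter_Ico {a b c : ℕ} (ha : a ∈ P) (hc : c ∈ P) (hac : a < c) (hcb : c < b) :
    2 ≤ #(P ∩ Ico a b) := by
  have : {a, c} ⊆ P ∩ Ico a b := by
    intro t ht
    rcases mem_insert.mp ht with rfl | ht
    · exact mem_inter.mpr ⟨ha, mem_Ico.mpr ⟨le_rfl, hac.trans hcb⟩⟩
    · rw [mem_singleton.mp ht]
      exact mem_inter.mpr ⟨hc, mem_Ico.mpr ⟨hac.le, hcb⟩⟩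
  simpa [card_pair hac.ne] using card_le_card this

theorem inter_Ico_subset_erase_max' (hne : P.Nonempty) {a b : ℕ} (hb : b ∈ P) :
    P ∩ Ico a b ⊆ P.erase (P.max' hne) := fun t ht => by
  have := P.le_max' b hb
  simp only [mem_inter, mem_Ico] at ht
  exact mem_erase.mpr ⟨by omega, ht.1⟩

theorem inter_Ico_min'_max' (hne : P.Nonempty) :
    P ∩ Ico (P.min' hne) (P.max' hne) = P.erase (P.max' hne) := by
  refine subset_antisymm (inter_Ico_subset_erase_max' hne (P.max'_mem hne)) fun t ht => ?_
  obtain ⟨ht', ht⟩ := mem_erase.mp ht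
  exact mem_inter.mpr ⟨ht, mem_Ico.mpr ⟨P.min'_le t ht, lt_of_le_of_ne (P.le_max' t ht) ht'⟩⟩

end Chords

section BookOfClique

/- `pg a b` is the page of the chord joining the spine positions `a < b` of `P`, `none` meaning
that it is drawn on the spine: a book embedding of the complete graph on `P`. -/
variable {k : ℕ} {P : Finset ℕ} {pg : ℕ → ℕ → Option (Fin k)}

theorem card_consecutive_pairs_le :
    #{x ∈ P ×ˢ P | x.1 < x.2 ∧ ¬∃ c ∈ P, x.1 < c ∧ c < x.2} ≤ #P - 1 := by
  rcases P.eq_empty_or_nonempty with rfl | hne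
  · simp
  rw [← card_erase_of_mem (P.max'_mem hne)]
  refine card_le_card_of_injOn Prod.fst (fun x hx => ?_) fun x hx y hy hxy => ?_
  · simp only [coe_filter, Set.mem_ofPred_eq, mem_product] at hx
    have := P.le_max' _ hx.1.2
    exact mem_erase.mpr ⟨by omega, hx.1.1⟩
  · simp only [coe_filter, Set.mem_ofPred_eq, mem_product] at hx hy
    have : x.2 = y.2 := by
      by_contra hne
      rcases lt_or_gt_of_ne hne with h | h
      · exact hy.2.2 ⟨x.2, hx.1.2, hxy ▸ hx.2.1, h⟩
      · exact hx.2.2 ⟨y.2, hy.1.2, hxy ▸ hy.2.1, h⟩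
    exact Prod.ext hxy this

theorem card_page_chords_le (hne : P.Nonempty)
    (hcross : ∀ a ∈ P, ∀ b ∈ P, ∀ c ∈ P, ∀ d ∈ P, ∀ p, pg a b = some p → pg c d = some p →
      ¬(a < c ∧ c < b ∧ b < d)) (p : Fin k) :
    #{x ∈ P ×ˢ P | x.1 < x.2 ∧ (∃ c ∈ P, x.1 < c ∧ c < x.2) ∧
      x ≠ (P.min' hne, P.max' hne) ∧ pg x.1 x.2 = some p} ≤ #P - 3 := by
  set S := {x ∈ P ×ˢ P | x.1 < x.2 ∧ (∃ c ∈ P, x.1 < c ∧ c < x.2) ∧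
      x ≠ (P.min' hne, P.max' hne) ∧ pg x.1 x.2 = some p}
  have hmem : ∀ x ∈ S, x.1 ∈ P ∧ x.2 ∈ P ∧ x.1 < x.2 ∧ (∃ c ∈ P, x.1 < c ∧ c < x.2) ∧
      x ≠ (P.min' hne, P.max' hne) ∧ pg x.1 x.2 = some p := by
    intro x hx
    simp only [S, mem_filter, mem_product] at hx
    exact ⟨hx.1.1, hx.1.2, hx.2⟩
  have hinj : Set.InjOn (fun x : ℕ × ℕ => P ∩ Ico x.1 x.2) S := fun x hx y hy h => by
    obtain ⟨hx₁, hx₂, hx, -⟩ := hmem x hx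
    obtain ⟨hy₁, hy₂, hy, -⟩ := hmem y hy
    obtain ⟨h₁, h₂⟩ := eq_of_inter_Ico_eq hx₁ hx₂ hy₁ hy₂ hx hy h
    exact Prod.ext h₁ h₂
  have houter : P.erase (P.max' hne) ∉ S.image fun x => P ∩ Ico x.1 x.2 := by
    simp only [mem_image, not_exists, not_and]
    intro x hx h
    obtain ⟨hx₁, hx₂, hx, -, hxo, -⟩ := hmem x hx
    obtain ⟨h₁, h₂⟩ := eq_of_inter_Ico_eq hx₁ hx₂ (P.min'_mem hne) (P.max'_mem hne) hx
      ((P.min'_le _ hx₁).trans_lt (hx.trans_le (P.le_max' _ hx₂)))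
      (h.trans (inter_Ico_min'_max' hne).symm)
    exact hxo (Prod.ext h₁ h₂)
  have hlam := card_le_of_laminar (F := S.image fun x => P ∩ Ico x.1 x.2)
    (G := P.erase (P.max' hne))
    (by
      simp only [mem_image]
      rintro _ ⟨x, hx, rfl⟩
      obtain ⟨hx₁, hx₂, hx, ⟨c, hc, hc₁, hc₂⟩, -⟩ := hmem x hx
      exact ⟨inter_Ico_subset_erase_max' hne hx₂, two_le_card_inter_Ico hx₁ hc hc₁ hc₂⟩)
    (by
      simp only [mem_image]
      rintro _ ⟨x, hx, rfl⟩ _ ⟨y, hy, rfl⟩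
      obtain ⟨hx₁, hx₂, -, -, -, hpx⟩ := hmem x hx
      obtain ⟨hy₁, hy₂, -, -, -, hpy⟩ := hmem y hy
      exact inter_Ico_laminar (hcross _ hx₁ _ hx₂ _ hy₁ _ hy₂ p hpx hpy)
        (hcross _ hy₁ _ hy₂ _ hx₁ _ hx₂ p hpy hpx))
  rw [if_neg houter, card_image_of_injOn hinj, card_erase_of_mem (P.max'_mem hne)] at hlam
  omega

theorem half_add_one_le_of_choose_two_le {n k : ℕ} (hn : 4 ≤ n)
    (h : n.choose 2 ≤ k * (n - 3) + 1 + (n - 1)) : (n + 1) / 2 ≤ k := by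
  by_contra! hk
  obtain ⟨m, rfl⟩ := Nat.exists_eq_add_of_le' hn
  have hchoose : 2 * (m + 4).choose 2 = (m + 4) * (m + 3) := by
    rw [Nat.choose_two_right, Nat.mul_div_cancel' (Nat.even_mul_pred_self _).two_dvd]; rfl
  have h2k : 2 * k ≤ m + 3 := by omega
  have : 2 * k * (m + 1) ≤ (m + 3) * (m + 1) := Nat.mul_le_mul_right _ h2k
  rw [show m + 4 - 3 = m + 1 by omega, show m + 4 - 1 = m + 3 by omega] at h
  nlinarith

theorem half_card_add_one_le_of_pages (hP : 4 ≤ #P)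
    (hspine : ∀ a ∈ P, ∀ b ∈ P, a < b → pg a b = none → ∀ c ∈ P, ¬(a < c ∧ c < b))
    (hcross : ∀ a ∈ P, ∀ b ∈ P, ∀ c ∈ P, ∀ d ∈ P, ∀ p, pg a b = some p → pg c d = some p →
      ¬(a < c ∧ c < b ∧ b < d)) :
    (#P + 1) / 2 ≤ k := by
  have hne : P.Nonempty := card_pos.mp (by omega)
  set Q := {x ∈ P ×ˢ P | x.1 < x.2}
  set N := {x ∈ Q | ∃ c ∈ P, x.1 < c ∧ c < x.2}
  have hQ : #Q = (#P).choose 2 := card_product_filter_lt (s := P)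
  have hsplit : #N + #{x ∈ Q | ¬∃ c ∈ P, x.1 < c ∧ c < x.2} = #Q :=
    card_filter_add_card_filter_not _
  have hcons : #{x ∈ Q | ¬∃ c ∈ P, x.1 < c ∧ c < x.2} ≤ #P - 1 := by
    simpa only [Q, filter_filter] using card_consecutive_pairs_le
  have hN : #N - 1 ≤ #(N.erase (P.min' hne, P.max' hne)) := pred_card_le_card_erase
  have hpages : #(N.erase (P.min' hne, P.max' hne)) ≤ k * (#P - 3) := by
    calc _ ≤ #((univ : Finset (Fin k)).biUnion fun p =>
          {x ∈ P ×ˢ P | x.1 < x.2 ∧ (∃ c ∈ P, x.1 < c ∧ c < x.2) ∧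
            x ≠ (P.min' hne, P.max' hne) ∧ pg x.1 x.2 = some p}) := by
          refine card_le_card fun x hx => ?_
          simp only [N, Q, mem_erase, mem_filter, mem_product] at hx
          obtain ⟨hxo, ⟨⟨hx₁, hx₂⟩, hx⟩, ⟨c, hc⟩⟩ := hx
          obtain ⟨p, hp⟩ := Option.ne_none_iff_exists'.mp fun h =>
            hspine _ hx₁ _ hx₂ hx h c hc.1 hc.2
          simp only [mem_biUnion, mem_univ, true_and, mem_filter, mem_product]
          exact ⟨p, ⟨hx₁, hx₂⟩, hx, ⟨c, hc⟩, hxo, hp⟩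
      _ ≤ ∑ _p : Fin k, (#P - 3) := card_biUnion_le.trans
          (sum_le_sum fun p _ => card_page_chords_le hne hcross p)
      _ = k * (#P - 3) := by simp
  exact half_add_one_le_of_choose_two_le hP (by omega)

end BookOfClique

theorem HasBookEmbedding.half_add_one_le_of_isNClique {W : Type*} {G : SimpleGraph W}
    {k n : ℕ} {S : Finset W} (hG : HasBookEmbedding G k) (hS : G.IsNClique n S) (hn : 4 ≤ n) :
    (n + 1) / 2 ≤ k := by
  classical
  obtain ⟨f, page, hinj, hnone, hcross⟩ := hG
  obtain ⟨w, -⟩ : S.Nonempty := card_pos.mp (by rw [hS.card_eq]; omega)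
  have : Nonempty W := ⟨w⟩
  obtain ⟨g, hgf⟩ := hinj.hasLeftInverse
  have hPS : ∀ a ∈ S.image f, g a ∈ S ∧ f (g a) = a := by
    intro a ha
    obtain ⟨x, hx, rfl⟩ := mem_image.mp ha
    rw [hgf x]
    exact ⟨hx, rfl⟩
  have hadj : ∀ a ∈ S.image f, ∀ b ∈ S.image f, a < b → G.Adj (g a) (g b) :=
    fun a ha b hb hab => hS.isClique (hPS a ha).1 (hPS b hb).1 fun h =>
      hab.ne (by rw [← (hPS a ha).2, h, (hPS b hb).2])
  have hP : #(S.image f) = n := by rw [card_image_of_injective _ hinj, hS.card_eq]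
  refine hP ▸ half_card_add_one_le_of_pages
    (pg := fun a b => if h : G.Adj (g a) (g b) then page ⟨s(g a, g b), h⟩ else none) (hP ▸ hn)
    (fun a ha b hb hab hpg c hc ⟨hac, hcb⟩ => ?_)
    (fun a ha b hb c hc d hd p hpab hpcd ⟨hac, hcb, hbd⟩ => ?_)
  · rw [dif_pos (hadj a ha b hb hab)] at hpg
    obtain ⟨x, y, hxy, hfxy, hbetween⟩ := hnone _ hpg
    rcases Sym2.eq_iff.mp hxy with ⟨rfl, rfl⟩ | ⟨rfl, rfl⟩
    · rw [(hPS a ha).2, (hPS b hb).2] at hbetween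
      exact hbetween (g c) (by rw [(hPS c hc).2]; exact ⟨hac, hcb⟩)
    · rw [(hPS a ha).2, (hPS b hb).2] at hfxy
      omega
  · rw [dif_pos (hadj a ha b hb (hac.trans hcb))] at hpab
    rw [dif_pos (hadj c hc d hd (hcb.trans hbd))] at hpcd
    refine hcross _ _ (by rw [hpab]; rfl) (hpab.trans hpcd.symm)
      ⟨g a, g b, g c, g d, rfl, rfl, ?_⟩
    rw [(hPS a ha).2, (hPS b hb).2, (hPS c hc).2, (hPS d hd).2]
    exact ⟨hac, hcb, hbd⟩

/-- The page of the chord `{a, b}` in the classical `M`-page book embedding of `K_{2M}` on the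
spine `0, …, 2M - 1`: chords whose endpoint sums agree modulo `2M` are parallel, and two
consecutive parallel classes never cross. -/
def chordPage (M a b : ℕ) : ℕ := (a + b) % (2 * M) / 2

theorem chordPage_comm (M a b : ℕ) : chordPage M a b = chordPage M b a := by
  rw [chordPage, chordPage, add_comm]

theorem chordPage_lt {M : ℕ} (hM : 0 < M) (a b : ℕ) : chordPage M a b < M := by
  have := Nat.mod_lt (a + b) (show 0 < 2 * M by omega)
  rw [chordPage]
  omega

theorem chordPage_ne {M a b c d : ℕ} (h₁ : a < c) (h₂ : c < b) (h₃ : b < d) (h₄ : d < 2 * M) :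
    chordPage M a b ≠ chordPage M c d := by
  rw [chordPage, chordPage]
  rcases lt_or_ge (a + b) (2 * M) with hab | hab <;>
    rcases lt_or_ge (c + d) (2 * M) with hcd | hcd
  · rw [Nat.mod_eq_of_lt hab, Nat.mod_eq_of_lt hcd]
    omega
  · rw [Nat.mod_eq_of_lt hab, Nat.mod_eq_sub_mod hcd, Nat.mod_eq_of_lt (by omega)]
    omega
  · omega
  · rw [Nat.mod_eq_sub_mod hab, Nat.mod_eq_of_lt (by omega), Nat.mod_eq_sub_mod hcd,
      Nat.mod_eq_of_lt (by omega)]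
    omega

theorem completeExpansion_adj {V : Type*} {G : SimpleGraph V} {x y : IncidencePair G} :
    (completeExpansion G).Adj x y ↔ x ≠ y ∧ (x.1.1 = y.1.1 ∨ x.1.2 = y.1.2) := by
  rw [completeExpansion, fromRel_adj]
  refine and_congr_right fun _ => ⟨?_, Or.inl⟩
  rintro (h | h)
  · exact h
  · exact h.imp Eq.symm Eq.symm

namespace IncidencePair

variable {V : Type*} {G : SimpleGraph V}

noncomputable def other (x : IncidencePair G) : V := Sym2.Mem.other x.2.2

theorem mk_other (x : IncidencePair G) : s(x.1.1, x.other) = x.1.2 := Sym2.other_spec x.2.2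

theorem adj_other (x : IncidencePair G) : G.Adj x.1.1 x.other := by
  rw [← mem_edgeSet, mk_other]
  exact x.2.1

theorem ext_of_other {x y : IncidencePair G} (h₁ : x.1.1 = y.1.1) (h₂ : x.other = y.other) :
    x = y :=
  Subtype.ext (Prod.ext h₁ (by rw [← mk_other x, ← mk_other y, h₁, h₂]))

theorem other_eq_of_adj {x y : IncidencePair G} (h : (completeExpansion G).Adj x y)
    (hne : x.1.1 ≠ y.1.1) : x.other = y.1.1 := by
  have hy : y.1.1 ∈ x.1.2 := (completeExpansion_adj.mp h).2.resolve_left hne ▸ y.2.2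
  rw [← mk_other x, Sym2.mem_iff] at hy
  exact hy.resolve_left (Ne.symm hne) |>.symm

variable [Fintype V] [DecidableEq V] [DecidableRel G.Adj]

theorem card_fst_eq (v : V) : #{x : IncidencePair G | x.1.1 = v} = G.degree v := by
  rw [← G.card_incidenceFinset_eq_degree]
  refine card_bij (fun x _ => x.1.2) (fun x hx => ?_) (fun x hx y hy hxy => ?_) fun e he => ?_
  · rw [mem_filter] at hx
    exact (mem_incidenceFinset _ _ _).mpr ⟨x.2.1, hx.2 ▸ x.2.2⟩
  · rw [mem_filter] at hx hy
    exact Subtype.ext (Prod.ext (hx.2.trans hy.2.symm) hxy)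
  · rw [mem_incidenceFinset] at he
    exact ⟨⟨(v, e), he⟩, mem_filter.mpr ⟨mem_univ _, rfl⟩, rfl⟩

theorem isNClique_fst_eq (v : V) :
    (completeExpansion G).IsNClique (G.degree v) {x : IncidencePair G | x.1.1 = v} := by
  refine ⟨fun x hx y hy hxy => completeExpansion_adj.mpr ⟨hxy, Or.inl ?_⟩, card_fst_eq v⟩
  simp only [coe_filter, Set.mem_ofPred_eq, mem_univ, true_and] at hx hy
  rw [hx, hy]

end IncidencePair

theorem List.IsPrefix.of_le_of_le {α : Type*} [LinearOrder α] {P A B C : List α}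
    (hA : P <+: A) (hC : P <+: C) (hAB : A ≤ B) (hBC : B ≤ C) : P <+: B := by
  induction P generalizing A B C with
  | nil => exact nil_prefix
  | cons p P ih =>
    obtain ⟨a, rfl⟩ := hA
    obtain ⟨c, rfl⟩ := hC
    cases B with
    | nil => exact absurd hAB (by simp)
    | cons b B =>
      rw [cons_append, le_iff_lt_or_eq, cons_lt_cons_iff] at hAB
      rw [cons_append, le_iff_lt_or_eq, cons_lt_cons_iff] at hBC
      rcases hAB with (hpb | ⟨rfl, hAB⟩) | hAB
      · rcases hBC with (hbp | ⟨rfl, -⟩) | hBC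
        · exact absurd (hpb.trans hbp) (lt_irrefl p)
        · exact absurd hpb (lt_irrefl _)
        · exact absurd (cons.inj hBC).1 hpb.ne'
      · rcases hBC with (hbp | ⟨-, hBC⟩) | hBC
        · exact absurd hbp (lt_irrefl _)
        · exact cons_prefix_cons.mpr
            ⟨rfl, ih (prefix_append P a) (prefix_append P c) hAB.le hBC.le⟩
        · exact hBC ▸ prefix_append (p :: P) c
      · exact hAB ▸ prefix_append (p :: P) a

theorem Finset.eq_Ico_of_convex {S : Finset ℕ} (hne : S.Nonempty)
    (hconv : ∀ a ∈ S, ∀ c ∈ S, ∀ b, a ≤ b → b ≤ c → b ∈ S) :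
    S = Ico (S.min' hne) (S.min' hne + #S) := by
  have hIcc : S = Icc (S.min' hne) (S.max' hne) := by
    ext t
    rw [mem_Icc]
    exact ⟨fun ht => ⟨S.min'_le t ht, S.le_max' t ht⟩,
      fun ht => hconv _ (S.min'_mem hne) _ (S.max'_mem hne) t ht.1 ht.2⟩
  have hle : S.min' hne ≤ S.max' hne := S.min'_le _ (S.max'_mem hne)
  have hcard : #S = S.max' hne + 1 - S.min' hne := by
    conv_lhs => rw [hIcc]
    exact Nat.card_Icc _ _
  ext t
  rw [mem_Ico, hcard]
  conv_lhs => rw [hIcc]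
  rw [mem_Icc]
  omega

namespace SimpleGraph.IsTree

variable {V : Type*} [LinearOrder V] {T : SimpleGraph V} (hT : T.IsTree)

noncomputable def root : V := hT.connected.nonempty.some

noncomputable def pathFromRoot (x : V) : T.Path hT.root x :=
  (hT.connected.preconnected hT.root x).some.toPath

noncomputable def rootPath (x : V) : List V := (hT.pathFromRoot x).1.support

def IsChild (u w : V) : Prop := hT.rootPath w = hT.rootPath u ++ [w]

variable {hT}

theorem eq_pathFromRoot {x : V} (p : T.Path hT.root x) : p = hT.pathFromRoot x :=
  Subsingleton.elim (h := hT.isAcyclic.subsingleton_path _ _) p _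

theorem rootPath_eq_support {x : V} (p : T.Path hT.root x) : hT.rootPath x = p.1.support := by
  rw [rootPath, ← eq_pathFromRoot p]

theorem getLast?_rootPath (x : V) : (hT.rootPath x).getLast? = some x := by
  rw [rootPath, List.getLast?_eq_some_getLast (Walk.support_ne_nil _), Walk.getLast_support]

theorem rootPath_injective : Function.Injective hT.rootPath := fun x y h =>
  Option.some_inj.mp ((getLast?_rootPath x).symm.trans (h ▸ getLast?_rootPath y))

theorem mem_rootPath_self (x : V) : x ∈ hT.rootPath x := Walk.end_mem_support _

theorem isChild_or_isChild_of_adj {u w : V} (h : T.Adj u w) :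
    hT.IsChild u w ∨ hT.IsChild w u := by
  set p := (hT.pathFromRoot u).1
  by_cases hw : w ∈ p.support
  · right
    have hdrop : (p.dropUntil w hw).support = [w, u] := by
      have := congrArg (fun q : T.Path w u => q.1.support)
        (Subsingleton.elim (h := hT.isAcyclic.subsingleton_path _ _)
          ⟨_, (hT.pathFromRoot u).2.dropUntil hw⟩ (Path.singleton h.symm))
      simpa [Path.singleton] using this
    have hsplit : p.support = (p.takeUntil w hw).support ++ (p.dropUntil w hw).support.tail := by
      rw [← Walk.support_append, p.take_spec hw]
    rw [IsChild, rootPath_eq_support ⟨_, (hT.pathFromRoot u).2.takeUntil hw⟩]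
    change p.support = _
    rw [hsplit, hdrop]
    rfl
  · left
    have hpath : (p.concat h).IsPath := by
      rw [← Walk.isPath_reverse_iff, Walk.reverse_concat, Walk.cons_isPath_iff,
        Walk.isPath_reverse_iff, Walk.support_reverse, List.mem_reverse]
      exact ⟨(hT.pathFromRoot u).2, hw⟩
    rw [IsChild, rootPath_eq_support ⟨_, hpath⟩, Walk.support_concat]
    rfl

theorem IsChild.left_unique {u u' w : V} (h : hT.IsChild u w) (h' : hT.IsChild u' w) :
    u = u' :=
  rootPath_injective (List.append_inj_left' (h.symm.trans h') rfl)

variable [Fintype V]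

variable (hT) in
noncomputable def preorder (x : V) : ℕ := #{y | hT.rootPath y < hT.rootPath x}

variable (hT) in
noncomputable def subtree (v : V) : Finset V := {x | hT.rootPath v <+: hT.rootPath x}

theorem preorder_lt_preorder_of_lt {x y : V} (h : hT.rootPath y < hT.rootPath x) :
    hT.preorder y < hT.preorder x := by
  refine card_lt_card ⟨fun z hz => ?_, fun hsub => ?_⟩
  · simp only [mem_filter, mem_univ, true_and] at hz ⊢
    exact hz.trans h
  · have := hsub (mem_filter.mpr ⟨mem_univ y, h⟩)
    simp at this

theorem preorder_injective : Function.Injective hT.preorder := fun x y h => by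
  rcases lt_trichotomy (hT.rootPath x) (hT.rootPath y) with h' | h' | h'
  · exact absurd h (preorder_lt_preorder_of_lt h').ne
  · exact rootPath_injective h'
  · exact absurd h (preorder_lt_preorder_of_lt h').ne'

theorem exists_preorder_eq_of_le {t : ℕ} {c : V} (h : t ≤ hT.preorder c) :
    ∃ b, hT.preorder b = t := by
  have hlt : ∀ x, hT.preorder x < Fintype.card V := fun x =>
    card_lt_univ_of_notMem (x := x) (by simp)
  obtain ⟨b, -, hb⟩ := surjOn_of_injOn_of_card_le (s := univ) (t := range (Fintype.card V))
    hT.preorder (fun x _ => mem_range.mpr (hlt x)) (preorder_injective.injOn) (by simp)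
    (mem_range.mpr (h.trans_lt (hlt c)))
  exact ⟨b, hb⟩

theorem IsChild.preorder_lt {u w : V} (h : hT.IsChild u w) : hT.preorder u < hT.preorder w := by
  refine preorder_lt_preorder_of_lt ?_
  rw [h]
  simpa using List.append_left_lt (l₁ := hT.rootPath u) (List.nil_lt_cons w [])

theorem mem_subtree {v x : V} : x ∈ hT.subtree v ↔ hT.rootPath v <+: hT.rootPath x := by
  simp [subtree]

theorem self_mem_subtree (v : V) : v ∈ hT.subtree v := mem_subtree.mpr (List.prefix_refl _)

theorem IsChild.mem_subtree {u w : V} (h : hT.IsChild u w) : w ∈ hT.subtree u :=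
  IsTree.mem_subtree.mpr ⟨[w], h.symm⟩

theorem subtree_subset {v x : V} (h : x ∈ hT.subtree v) : hT.subtree x ⊆ hT.subtree v :=
  fun _ hy => mem_subtree.mpr ((mem_subtree.mp h).trans (mem_subtree.mp hy))

theorem image_preorder_subtree (v : V) : (hT.subtree v).image hT.preorder =
    Ico (hT.preorder v) (hT.preorder v + #(hT.subtree v)) := by
  have hne : ((hT.subtree v).image hT.preorder).Nonempty :=
    ⟨_, mem_image_of_mem _ (self_mem_subtree v)⟩
  have hconv : ∀ a ∈ (hT.subtree v).image hT.preorder, ∀ c ∈ (hT.subtree v).image hT.preorder,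
      ∀ b, a ≤ b → b ≤ c → b ∈ (hT.subtree v).image hT.preorder := by
    simp only [mem_image]
    rintro _ ⟨xa, hxa, rfl⟩ _ ⟨xc, hxc, rfl⟩ b hab hbc
    obtain ⟨xb, rfl⟩ := exists_preorder_eq_of_le hbc
    refine ⟨xb, mem_subtree.mpr ?_, rfl⟩
    have le_of_le : ∀ {x y}, hT.preorder x ≤ hT.preorder y → hT.rootPath x ≤ hT.rootPath y :=
      fun h => not_lt.mp fun h' => (preorder_lt_preorder_of_lt h').not_ge h
    exact (mem_subtree.mp hxa).of_le_of_le (mem_subtree.mp hxc) (le_of_le hab) (le_of_le hbc)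
  have hmin : ((hT.subtree v).image hT.preorder).min' hne = hT.preorder v := by
    refine le_antisymm (min'_le _ _ (mem_image_of_mem _ (self_mem_subtree v))) (le_min' _ _ _ ?_)
    simp only [mem_image]
    rintro _ ⟨x, hx, rfl⟩
    rcases (not_lt.mp (mem_subtree.mp hx).le).lt_or_eq with h | h
    · exact (preorder_lt_preorder_of_lt h).le
    · rw [rootPath_injective h]
  rw [eq_Ico_of_convex hne hconv, hmin, card_image_of_injective _ preorder_injective]

theorem mem_subtree_iff {v x : V} : x ∈ hT.subtree v ↔
    hT.preorder v ≤ hT.preorder x ∧ hT.preorder x < hT.preorder v + #(hT.subtree v) := by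
  rw [← mem_Ico, ← image_preorder_subtree, preorder_injective.mem_finset_image]

theorem exists_isChild_of_mem_subtree {v x : V} (h : x ∈ hT.subtree v) (hne : x ≠ v) :
    ∃ w, hT.IsChild v w ∧ x ∈ hT.subtree w := by
  obtain ⟨t, ht⟩ := mem_subtree.mp h
  cases t with
  | nil => exact absurd (rootPath_injective (by simpa using ht)).symm hne
  | cons w t =>
    have hadj : T.Adj v w := by
      have hchain : List.IsChain T.Adj (hT.rootPath x) := Walk.isChain_adj_support _
      rw [← ht, List.isChain_append] at hchain
      exact hchain.2.2 v (getLast?_rootPath v) w rfl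
    rcases isChild_or_isChild_of_adj hadj with hc | hc
    · exact ⟨w, hc, mem_subtree.mpr ⟨t, by rw [hc, ← ht]; simp⟩⟩
    · have hnd : (hT.rootPath x).Nodup := (hT.pathFromRoot x).2.support_nodup
      rw [← ht, hc] at hnd
      exact absurd (List.mem_cons_self ..)
        (List.disjoint_of_nodup_append hnd (List.mem_append_left _ (mem_rootPath_self w)))

theorem IsChild.notMem_subtree {v w w' x : V} (h : hT.IsChild v w) (h' : hT.IsChild v w')
    (hne : w ≠ w') (hx : x ∈ hT.subtree w) : x ∉ hT.subtree w' := fun hx' => by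
  have hlen : (hT.rootPath w).length = (hT.rootPath w').length := by rw [h, h']; simp
  rcases List.prefix_or_prefix_of_prefix (IsTree.mem_subtree.mp hx) (IsTree.mem_subtree.mp hx')
    with hp | hp
  · exact hne (rootPath_injective (hp.eq_of_length hlen))
  · exact hne (rootPath_injective (hp.eq_of_length hlen.symm)).symm

theorem card_subtree_pos (v : V) : 0 < #(hT.subtree v) :=
  card_pos.mpr ⟨v, self_mem_subtree v⟩

theorem preorder_intervals_disjoint {v v' : V} (h : v' ∉ hT.subtree v)
    (h' : v ∉ hT.subtree v') : hT.preorder v + #(hT.subtree v) ≤ hT.preorder v' ∨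
      hT.preorder v' + #(hT.subtree v') ≤ hT.preorder v := by
  by_contra! H
  rcases le_total (hT.preorder v) (hT.preorder v') with hle | hle
  · exact h (mem_subtree_iff.mpr ⟨hle, H.1⟩)
  · exact h' (mem_subtree_iff.mpr ⟨hle, H.2⟩)

variable (hT) in
/-- The edge from a vertex to its child `c` contributes the two consecutive spine positions
`2 * preorder c - 2` (at the parent) and `2 * preorder c - 1` (at `c`); as `preorder c ≥ 1`,
nothing is truncated. -/
noncomputable def spinePos (x : IncidencePair T) : ℕ :=
  if hT.preorder x.1.1 < hT.preorder x.other then 2 * hT.preorder x.other - 2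
  else 2 * hT.preorder x.1.1 - 1

theorem spinePos_cases (x : IncidencePair T) :
    hT.IsChild x.other x.1.1 ∧ hT.spinePos x = 2 * hT.preorder x.1.1 - 1 ∧
        hT.preorder x.other < hT.preorder x.1.1 ∨
      hT.IsChild x.1.1 x.other ∧ hT.spinePos x = 2 * hT.preorder x.other - 2 ∧
        hT.preorder x.1.1 < hT.preorder x.other := by
  rcases isChild_or_isChild_of_adj (hT := hT) x.adj_other with hc | hc
  · have hlt := hc.preorder_lt
    exact Or.inr ⟨hc, if_pos hlt, hlt⟩
  · have hlt := hc.preorder_lt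
    exact Or.inl ⟨hc, if_neg (by omega), hlt⟩

theorem spinePos_injective : Function.Injective hT.spinePos := by
  intro x y h
  rcases spinePos_cases x with ⟨hcx, hfx, hlx⟩ | ⟨hcx, hfx, hlx⟩ <;>
    rcases spinePos_cases y with ⟨hcy, hfy, hly⟩ | ⟨hcy, hfy, hly⟩
  · have h₁ : x.1.1 = y.1.1 := preorder_injective (by omega)
    rw [h₁] at hcx
    exact IncidencePair.ext_of_other h₁ (hcx.left_unique hcy)
  · omega
  · omega
  · have h₂ : x.other = y.other := preorder_injective (by omega)
    rw [h₂] at hcx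
    exact IncidencePair.ext_of_other (hcx.left_unique hcy) h₂

theorem spinePos_mem_Icc {w : V} {x : IncidencePair T} (hx : x.1.1 ∈ hT.subtree w) :
    hT.spinePos x ∈ Icc (2 * hT.preorder w - 1) (2 * (hT.preorder w + #(hT.subtree w)) - 3) := by
  rw [mem_Icc]
  have hmem := mem_subtree_iff.mp hx
  rcases spinePos_cases x with ⟨-, hf, -⟩ | ⟨hc, hf, hlt⟩
  · omega
  · have hu := mem_subtree_iff.mp (subtree_subset hx hc.mem_subtree)
    have hne : hT.preorder x.other ≠ hT.preorder w := fun he => by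
      rw [preorder_injective he] at hlt
      omega
    omega

theorem IsChild.spinePos_notMem_Icc {u w : V} (hc : hT.IsChild u w) {x : IncidencePair T}
    (hx : x.1.1 = u) :
    hT.spinePos x ∉ Icc (2 * hT.preorder w - 1) (2 * (hT.preorder w + #(hT.subtree w)) - 3) := by
  rw [mem_Icc]
  have hpw := hc.preorder_lt
  rcases spinePos_cases x with ⟨-, hf, hlt⟩ | ⟨hc', hf, hlt⟩
  · rw [hx] at hf hlt
    omega
  · rw [hx] at hc'
    by_cases hew : x.other = w
    · rw [hew] at hf
      omega
    · have := mem_subtree_iff.not.mp (hc'.notMem_subtree hc hew (self_mem_subtree x.other))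
      have := card_subtree_pos (hT := hT) w
      omega

variable (hT) in
def SpineSeparated (v v' : V) : Prop :=
  ∃ lo hi : ℕ, (∀ x : IncidencePair T, x.1.1 = v → hT.spinePos x ∈ Icc lo hi) ∧
    ∀ x : IncidencePair T, x.1.1 = v' → hT.spinePos x ∉ Icc lo hi

theorem spineSeparated_or {v v' : V} (hne : v ≠ v') :
    hT.SpineSeparated v v' ∨ hT.SpineSeparated v' v := by
  by_cases h : v' ∈ hT.subtree v
  · obtain ⟨w, hw, hv'w⟩ := exists_isChild_of_mem_subtree h hne.symm
    exact Or.inr ⟨2 * hT.preorder w - 1, 2 * (hT.preorder w + #(hT.subtree w)) - 3,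
      fun x hx => spinePos_mem_Icc (by rw [hx]; exact hv'w), fun x => hw.spinePos_notMem_Icc⟩
  by_cases h' : v ∈ hT.subtree v'
  · obtain ⟨w, hw, hvw⟩ := exists_isChild_of_mem_subtree h' hne
    exact Or.inl ⟨2 * hT.preorder w - 1, 2 * (hT.preorder w + #(hT.subtree w)) - 3,
      fun x hx => spinePos_mem_Icc (by rw [hx]; exact hvw), fun x => hw.spinePos_notMem_Icc⟩
  refine Or.inl ⟨2 * hT.preorder v - 1, 2 * (hT.preorder v + #(hT.subtree v)) - 3,
    fun x hx => spinePos_mem_Icc (by rw [hx]; exact self_mem_subtree v), fun x hx => ?_⟩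
  have := mem_Icc.mp (spinePos_mem_Icc (by rw [hx]; exact self_mem_subtree (hT := hT) v'))
  have := preorder_intervals_disjoint h h'
  have := card_subtree_pos (hT := hT) v
  have := card_subtree_pos (hT := hT) v'
  rw [mem_Icc]
  omega

theorem spinePos_not_interleaved {x y x' y' : IncidencePair T} (hne : x.1.1 ≠ x'.1.1)
    (hy : y.1.1 = x.1.1) (hy' : y'.1.1 = x'.1.1) :
    ¬(hT.spinePos x < hT.spinePos x' ∧ hT.spinePos x' < hT.spinePos y ∧
      hT.spinePos y < hT.spinePos y') := by
  rcases spineSeparated_or hne with ⟨lo, hi, hin, hout⟩ | ⟨lo, hi, hin, hout⟩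
  · have := mem_Icc.mp (hin x rfl)
    have := mem_Icc.mp (hin y hy)
    have := mem_Icc.not.mp (hout x' rfl)
    omega
  · have := mem_Icc.mp (hin x' rfl)
    have := mem_Icc.mp (hin y' hy')
    have := mem_Icc.not.mp (hout y hy)
    omega

theorem spinePos_consecutive_of_adj {x y : IncidencePair T} (h : (completeExpansion T).Adj x y)
    (hne : x.1.1 ≠ y.1.1) :
    hT.spinePos y = hT.spinePos x + 1 ∨ hT.spinePos x = hT.spinePos y + 1 := by
  have hx := IncidencePair.other_eq_of_adj h hne
  have hy := IncidencePair.other_eq_of_adj h.symm (Ne.symm hne)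
  have hpre : hT.preorder x.1.1 ≠ hT.preorder y.1.1 := fun h => hne (preorder_injective h)
  rw [spinePos, spinePos, hx, hy]
  split_ifs <;> omega

variable [DecidableRel T.Adj]

variable (hT) in
noncomputable def cliqueRank (x : IncidencePair T) : ℕ :=
  #{y : IncidencePair T | y.1.1 = x.1.1 ∧ hT.spinePos y < hT.spinePos x}

theorem cliqueRank_lt_degree (x : IncidencePair T) : hT.cliqueRank x < T.degree x.1.1 := by
  rw [← IncidencePair.card_fst_eq]
  refine card_lt_card ⟨fun y hy => ?_, fun hsub => ?_⟩
  · simp only [mem_filter, mem_univ, true_and] at hy ⊢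
    exact hy.1
  · simpa using hsub (mem_filter.mpr ⟨mem_univ x, rfl⟩)

theorem cliqueRank_lt_cliqueRank {x y : IncidencePair T} (h : x.1.1 = y.1.1)
    (hlt : hT.spinePos x < hT.spinePos y) : hT.cliqueRank x < hT.cliqueRank y := by
  refine card_lt_card ⟨fun z hz => ?_, fun hsub => ?_⟩
  · simp only [mem_filter, mem_univ, true_and] at hz ⊢
    exact ⟨hz.1.trans h, hz.2.trans hlt⟩
  · simpa using hsub (mem_filter.mpr ⟨mem_univ x, h, hlt⟩)

variable (hT) in
noncomputable def edgePage (x y : IncidencePair T) : ℕ :=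
  if x.1.1 = y.1.1 then chordPage ((T.degree x.1.1 + 1) / 2) (hT.cliqueRank x) (hT.cliqueRank y)
  else 0

theorem edgePage_comm (x y : IncidencePair T) : hT.edgePage x y = hT.edgePage y x := by
  by_cases h : x.1.1 = y.1.1
  · rw [edgePage, edgePage, if_pos h, if_pos h.symm, chordPage_comm, h]
  · rw [edgePage, edgePage, if_neg h, if_neg (Ne.symm h)]

theorem edgePage_lt (x y : IncidencePair T) : hT.edgePage x y < (T.maxDegree + 1) / 2 := by
  have hpos : 0 < T.degree x.1.1 := T.degree_pos_iff_exists_adj _ |>.mpr ⟨_, x.adj_other⟩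
  have hle := T.degree_le_maxDegree x.1.1
  rw [edgePage]
  split_ifs
  · exact (chordPage_lt (by omega) _ _).trans_le (by omega)
  · omega

theorem edgePage_ne_of_cross {a b c d : IncidencePair T} (hab : (completeExpansion T).Adj a b)
    (hcd : (completeExpansion T).Adj c d) (h₁ : hT.spinePos a < hT.spinePos c)
    (h₂ : hT.spinePos c < hT.spinePos b) (h₃ : hT.spinePos b < hT.spinePos d) :
    hT.edgePage a b ≠ hT.edgePage c d := by
  by_cases hab' : a.1.1 = b.1.1
  swap
  · rcases spinePos_consecutive_of_adj (hT := hT) hab hab' with h | h <;> omega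
  by_cases hcd' : c.1.1 = d.1.1
  swap
  · rcases spinePos_consecutive_of_adj (hT := hT) hcd hcd' with h | h <;> omega
  by_cases hac : a.1.1 = c.1.1
  · have hd := cliqueRank_lt_degree (hT := hT) d
    rw [← hcd', ← hac] at hd
    rw [edgePage, edgePage, if_pos hab', if_pos hcd', ← hac]
    exact chordPage_ne (cliqueRank_lt_cliqueRank hac h₁)
      (cliqueRank_lt_cliqueRank (hac.symm.trans hab') h₂)
      (cliqueRank_lt_cliqueRank (hab'.symm.trans (hac.trans hcd')) h₃) (by omega)
  · exact absurd ⟨h₁, h₂, h₃⟩ (spinePos_not_interleaved hac hab'.symm hcd'.symm)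

end SimpleGraph.IsTree

theorem SimpleGraph.IsTree.hasBookEmbedding_completeExpansion {V : Type*} [LinearOrder V]
    [Fintype V] {T : SimpleGraph V} [DecidableRel T.Adj] (hT : T.IsTree) :
    HasBookEmbedding (completeExpansion T) ((T.maxDegree + 1) / 2) := by
  refine ⟨hT.spinePos, fun e => some (Sym2.lift
    ⟨fun x y => ⟨hT.edgePage x y, edgePage_lt x y⟩, fun x y => Fin.ext (edgePage_comm x y)⟩ e.1),
    spinePos_injective, fun e he => absurd he (by simp), ?_⟩
  rintro ⟨_, he⟩ ⟨_, he'⟩ - hpage ⟨a, b, c, d, rfl, rfl, h₁, h₂, h₃⟩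
  simp only [Sym2.lift_mk, Option.some_inj, Fin.mk.injEq] at hpage
  exact edgePage_ne_of_cross he he' h₁ h₂ h₃ hpage

theorem stmt10 {V : Type*} [Fintype V] (T : SimpleGraph V) [DecidableRel T.Adj]
    (hT : T.IsTree) (hΔ : 4 ≤ T.maxDegree) :
    pageNumber (completeExpansion T) = (T.maxDegree + 1) / 2 := by
  let _ : LinearOrder V := LinearOrder.lift' (Fintype.equivFin V) (Fintype.equivFin V).injective
  have hub := hT.hasBookEmbedding_completeExpansion
  refine le_antisymm (Nat.sInf_le hub) (le_csInf ⟨_, hub⟩ fun k hk => ?_)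
  have := hT.connected.nonempty
  obtain ⟨v, hv⟩ := T.exists_maximal_degree_vertex
  rw [hv] at hΔ ⊢
  exact hk.half_add_one_le_of_isNClique (IncidencePair.isNClique_fst_eq v) hΔ
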